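/- arXiv:1505.05552 — 3 statements merged into one kernel-verified Lean document; each statement's English description precedes it below -/
import Mathlib

section
/- Assume |E| > m. Then the radial system has no nonzero square-integrable solutions: if R = (R₁,R₂) : ℝ → ℂ² is differentiable, satisfies T_rad R = E R pointwise on ℝ, and ∫_ℝ (|R₁|² + |R₂|²) dr < ∞, then R is identically zero. (This expresses that the point spectrum of the zero-G Kerr–Newman Dirac Hamiltonian is confined to the gap [−m, m] of the continuous spectrum.) -/
/-!
With `F = |R₁|² + |R₂|²` and `Q = conj R₁ · R₂`, solutions satisfy `F' = 4 Im((P + iW) Q)`, and the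
quantity `H = Re((P + iW) Q) + (E + V) F / 2` has derivative `Re((P' + iW') Q) + V' F / 2`: every
term carrying `E`, `V`, `P` or `W` cancels, so `|H'| = O(F / r²)`. Swapping `R₁` and `R₂` flips
the signs of `E`, `V` and `P`, so we may take `E > m`. As `|P| ≤ m` and `V, W → 0`, for large `r`
the quantity `H` is comparable to `F`; Grönwall with the integrable rate `1 / r²` then keeps `H`,
hence `F`, bounded below once `H` is positive somewhere, contradicting `F ∈ L¹`. So `F` vanishes
for large `r`, and `|F'| ≤ K F` carries this back to the whole line.
-/

noncomputable section

open MeasureTheory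

/-- V(r) = (−aκ + γ r)/ϖ² -/
def Vrad (a κ γv r : ℝ) : ℝ := (-(a*κ) + γv*r)/(r^2+a^2)
/-- P(r) = m r/ϖ -/
def Prad (a m r : ℝ) : ℝ := m*r/Real.sqrt (r^2+a^2)
/-- W(r) = λ/ϖ -/
def Wrad (a lam r : ℝ) : ℝ := lam/Real.sqrt (r^2+a^2)

/-- the radial eigenvalue equations T_rad (R₁,R₂) = E (R₁,R₂) at r -/
def RadEq (a m lam κ γv E : ℝ) (R1 R2 : ℝ → ℂ) (r : ℝ) : Prop :=
  Complex.I * deriv R1 r - ((Vrad a κ γv r : ℝ) : ℂ) * R1 r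
      - (((Prad a m r : ℝ) : ℂ) + Complex.I * ((Wrad a lam r : ℝ) : ℂ)) * R2 r
    = (E : ℂ) * R1 r ∧
  -Complex.I * deriv R2 r - ((Vrad a κ γv r : ℝ) : ℂ) * R2 r
      + (-((Prad a m r : ℝ) : ℂ) + Complex.I * ((Wrad a lam r : ℝ) : ℂ)) * R1 r
    = (E : ℂ) * R2 r

open Complex Filter Topology Set
open scoped ComplexConjugate

lemma not_integrable_of_forall_ge_le {f : ℝ → ℝ} {ε T : ℝ} (hε : 0 < ε)
    (hf : ∀ t ≥ T, ε ≤ f t) : ¬ Integrable f := by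
  intro hint
  have hconst : IntegrableOn (fun _ => ε) (Ici T) :=
    hint.integrableOn.mono' aestronglyMeasurable_const <|
      (ae_restrict_iff' measurableSet_Ici).2 <| .of_forall fun t ht => by
        rw [Real.norm_of_nonneg hε.le]; exact hf t ht
  simp [hε.ne'] at hconst

lemma monotoneOn_mul_exp_of_neg_mul_le_deriv {H H' φ g : ℝ → ℝ} {T : ℝ}
    (hH : ∀ t ≥ T, HasDerivAt H (H' t) t) (hφ : ∀ t ≥ T, HasDerivAt φ (g t) t)
    (h : ∀ t ≥ T, -(g t * H t) ≤ H' t) :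
    MonotoneOn (fun t => H t * Real.exp (φ t)) (Ici T) := by
  have hG : ∀ t ≥ T, HasDerivAt (fun t => H t * Real.exp (φ t))
      (H' t * Real.exp (φ t) + H t * (Real.exp (φ t) * g t)) t :=
    fun t ht => (hH t ht).mul (hφ t ht).exp
  refine monotoneOn_of_hasDerivWithinAt_nonneg (convex_Ici T)
    (f' := fun t => H' t * Real.exp (φ t) + H t * (Real.exp (φ t) * g t))
    (fun t ht => (hG t ht).continuousAt.continuousWithinAt) (fun t ht => ?_) (fun t ht => ?_) <;>
    rw [interior_Ici] at ht
  · exact (hG t ht.le).hasDerivWithinAt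
  · nlinarith [h t ht.le, Real.exp_pos (φ t)]

lemma eq_zero_of_neg_mul_le_deriv_of_le {F F' : ℝ → ℝ} {K T t : ℝ}
    (hF : ∀ t, HasDerivAt F (F' t) t) (hF0 : ∀ t, 0 ≤ F t) (hF' : ∀ t, -(K * F t) ≤ F' t)
    (hT : F T = 0) (ht : t ≤ T) : F t = 0 := by
  have hmono := monotoneOn_mul_exp_of_neg_mul_le_deriv (T := t) (φ := fun t => t * K)
    (fun s _ => hF s) (fun s _ => hasDerivAt_mul_const K) (fun s _ => hF' s)
  have h := hmono self_mem_Ici ht ht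
  simp only [hT, zero_mul] at h
  exact le_antisymm (nonpos_of_mul_nonpos_left h (Real.exp_pos _)) (hF0 t)

lemma eq_zero_of_lyapunov_of_integrable {F H H' : ℝ → ℝ} {T δ C c t : ℝ} (hT : 0 < T)
    (hδ : 0 < δ) (hc : 0 ≤ c) (hF : Integrable F) (hF0 : ∀ t ≥ T, 0 ≤ F t)
    (hH : ∀ t ≥ T, HasDerivAt H (H' t) t) (hlow : ∀ t ≥ T, δ * F t ≤ H t)
    (hup : ∀ t ≥ T, H t ≤ C * F t) (hH' : ∀ t ≥ T, -(c / t ^ 2 * F t) ≤ H' t) (ht : T ≤ t) :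
    F t = 0 := by
  -- the weight `exp (-c / (δ t))` absorbs the slow drift of `H`
  set φ : ℝ → ℝ := fun s => -(c / δ) * s⁻¹
  have hφ : ∀ s ≥ T, HasDerivAt φ (c / δ * (s ^ 2)⁻¹) s := fun s hs =>
    ((hasDerivAt_inv (hT.trans_le hs).ne').const_mul (-(c / δ))).congr_deriv (by ring)
  have hφ0 : ∀ s ≥ T, φ s ≤ 0 := fun s hs => by
    have := hT.trans_le hs
    simp only [φ, neg_mul, neg_nonpos]; positivity
  have hmono := monotoneOn_mul_exp_of_neg_mul_le_deriv hH hφ fun s hs => by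
    have key : c / s ^ 2 * F s ≤ c / δ * (s ^ 2)⁻¹ * H s := by
      calc c / s ^ 2 * F s = c / δ * (s ^ 2)⁻¹ * (δ * F s) := by field_simp
        _ ≤ c / δ * (s ^ 2)⁻¹ * H s := by gcongr; exact hlow s hs
    linarith [hH' s hs]
  have hH0 : ∀ s ≥ T, 0 ≤ H s := fun s hs => (mul_nonneg hδ.le (hF0 s hs)).trans (hlow s hs)
  have hHt : H t ≤ 0 := by
    by_contra! hpos
    refine not_integrable_of_forall_ge_le (T := t) (f := fun s => C * F s)
      (by positivity : 0 < H t * Real.exp (φ t)) (fun s hs => ?_) (hF.const_mul C)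
    calc H t * Real.exp (φ t) ≤ H s * Real.exp (φ s) := hmono ht (ht.trans hs) hs
      _ ≤ H s := mul_le_of_le_one_right (hH0 s (ht.trans hs))
          (Real.exp_le_one_iff.2 (hφ0 s (ht.trans hs)))
      _ ≤ C * F s := hup s (ht.trans hs)
  nlinarith [hlow t ht, hF0 t ht]

lemma abs_le_sqrt_sq_add_sq (r a : ℝ) : |r| ≤ √(r ^ 2 + a ^ 2) :=
  Real.abs_le_sqrt (by nlinarith [sq_nonneg a])

lemma abs_Prad_le (a m r : ℝ) : |Prad a m r| ≤ |m| := by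
  rw [Prad, abs_div, abs_of_nonneg (Real.sqrt_nonneg _), abs_mul]
  exact div_le_of_le_mul₀ (Real.sqrt_nonneg _) (abs_nonneg m)
    (mul_le_mul_of_nonneg_left (abs_le_sqrt_sq_add_sq r a) (abs_nonneg m))

lemma abs_Wrad_le {a : ℝ} (ha : a ≠ 0) (lam r : ℝ) : |Wrad a lam r| ≤ |lam| / |a| := by
  rw [Wrad, abs_div, abs_of_nonneg (Real.sqrt_nonneg _)]
  exact div_le_div_of_nonneg_left (abs_nonneg lam) (abs_pos.2 ha)
    (by simpa [add_comm] using abs_le_sqrt_sq_add_sq a r)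

lemma abs_Vrad_le_div {a r : ℝ} (κ γv : ℝ) (hr : 1 ≤ r) :
    |Vrad a κ γv r| ≤ (|a * κ| + |γv|) / r := by
  have hr0 : 0 < r := one_pos.trans_le hr
  have hnum : |-(a * κ) + γv * r| ≤ |a * κ| + |γv| * r := by
    simpa [abs_mul, abs_of_pos hr0] using abs_add_le (-(a * κ)) (γv * r)
  rw [Vrad, abs_div, abs_of_pos (by positivity : (0 : ℝ) < r ^ 2 + a ^ 2),
    div_le_div_iff₀ (by positivity) hr0]
  nlinarith [mul_le_mul_of_nonneg_right hnum hr0.le,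
    mul_nonneg (mul_nonneg (abs_nonneg (a * κ)) hr0.le) (sub_nonneg.2 hr),
    mul_nonneg (add_nonneg (abs_nonneg (a * κ)) (abs_nonneg γv)) (sq_nonneg a)]

lemma abs_Wrad_le_div {r : ℝ} (a lam : ℝ) (hr : 0 < r) : |Wrad a lam r| ≤ |lam| / r := by
  rw [Wrad, abs_div, abs_of_nonneg (Real.sqrt_nonneg _)]
  exact div_le_div_of_nonneg_left (abs_nonneg lam) hr
    (by simpa [abs_of_pos hr] using abs_le_sqrt_sq_add_sq r a)

lemma tendsto_abs_Vrad_add_abs_Wrad (a lam κ γv : ℝ) :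
    Tendsto (fun r => |Vrad a κ γv r| + |Wrad a lam r|) atTop (𝓝 0) := by
  refine squeeze_zero' (.of_forall fun r => by positivity) ?_
    ((tendsto_const_nhds (x := |a * κ| + |γv| + |lam|)).div_atTop tendsto_id)
  filter_upwards [eventually_ge_atTop 1] with r hr
  rw [add_div _ |lam|]
  exact add_le_add (abs_Vrad_le_div κ γv hr) (abs_Wrad_le_div a lam (one_pos.trans_le hr))

lemma hasDerivAt_sqrt_sq_add_sq {a : ℝ} (ha : a ≠ 0) (r : ℝ) :
    HasDerivAt (fun t => √(t ^ 2 + a ^ 2)) (r / √(r ^ 2 + a ^ 2)) r := by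
  have h := ((hasDerivAt_pow 2 r).add_const (a ^ 2)).sqrt (by positivity)
  convert h using 1
  field_simp
  ring

lemma hasDerivAt_Prad {a : ℝ} (ha : a ≠ 0) (m r : ℝ) :
    HasDerivAt (Prad a m) (m * a ^ 2 / ((r ^ 2 + a ^ 2) * √(r ^ 2 + a ^ 2))) r := by
  have hs : 0 < √(r ^ 2 + a ^ 2) := Real.sqrt_pos.2 (by positivity)
  have hsq : √(r ^ 2 + a ^ 2) ^ 2 = r ^ 2 + a ^ 2 := Real.sq_sqrt (by positivity)
  refine (((hasDerivAt_id' r).const_mul m).div (hasDerivAt_sqrt_sq_add_sq ha r)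
    hs.ne').congr_deriv ?_
  field_simp
  rw [hsq]
  ring

lemma hasDerivAt_Wrad {a : ℝ} (ha : a ≠ 0) (lam r : ℝ) :
    HasDerivAt (Wrad a lam) (-(lam * r) / ((r ^ 2 + a ^ 2) * √(r ^ 2 + a ^ 2))) r := by
  have hs : 0 < √(r ^ 2 + a ^ 2) := Real.sqrt_pos.2 (by positivity)
  have hsq : √(r ^ 2 + a ^ 2) ^ 2 = r ^ 2 + a ^ 2 := Real.sq_sqrt (by positivity)
  refine ((hasDerivAt_const r lam).div (hasDerivAt_sqrt_sq_add_sq ha r) hs.ne').congr_deriv ?_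
  field_simp
  rw [hsq]
  ring

lemma hasDerivAt_Vrad {a : ℝ} (ha : a ≠ 0) (κ γv r : ℝ) :
    HasDerivAt (Vrad a κ γv) ((γv * (a ^ 2 - r ^ 2) + 2 * a * κ * r) / (r ^ 2 + a ^ 2) ^ 2) r := by
  refine ((((hasDerivAt_id' r).const_mul γv).const_add (-(a * κ))).div
    ((hasDerivAt_pow 2 r).add_const (a ^ 2)) (by positivity)).congr_deriv ?_
  field_simp
  ring

lemma abs_deriv_Prad_le {a : ℝ} (ha : a ≠ 0) (m r : ℝ) :
    |deriv (Prad a m) r| ≤ |m * a| / (r ^ 2 + a ^ 2) := by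
  have hs : 0 < √(r ^ 2 + a ^ 2) := Real.sqrt_pos.2 (by positivity)
  have has : |a| ≤ √(r ^ 2 + a ^ 2) := by simpa [add_comm] using abs_le_sqrt_sq_add_sq a r
  rw [(hasDerivAt_Prad ha m r).deriv, abs_div,
    abs_of_pos (by positivity : 0 < (r ^ 2 + a ^ 2) * √(r ^ 2 + a ^ 2)), abs_mul, abs_mul, abs_pow,
    div_le_div_iff₀ (by positivity) (by positivity)]
  nlinarith [mul_le_mul_of_nonneg_left has (by positivity : 0 ≤ |m| * |a| * (r ^ 2 + a ^ 2))]

lemma abs_deriv_Wrad_le {a : ℝ} (ha : a ≠ 0) (lam r : ℝ) :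
    |deriv (Wrad a lam) r| ≤ |lam| / (r ^ 2 + a ^ 2) := by
  have hs : 0 < √(r ^ 2 + a ^ 2) := Real.sqrt_pos.2 (by positivity)
  rw [(hasDerivAt_Wrad ha lam r).deriv, abs_div,
    abs_of_pos (by positivity : 0 < (r ^ 2 + a ^ 2) * √(r ^ 2 + a ^ 2)), abs_neg, abs_mul,
    div_le_div_iff₀ (by positivity) (by positivity)]
  nlinarith [mul_le_mul_of_nonneg_left (abs_le_sqrt_sq_add_sq r a)
    (by positivity : 0 ≤ |lam| * (r ^ 2 + a ^ 2))]

lemma abs_deriv_Vrad_le {a : ℝ} (ha : a ≠ 0) (κ γv r : ℝ) :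
    |deriv (Vrad a κ γv) r| ≤ (|γv| + |κ|) / (r ^ 2 + a ^ 2) := by
  have hs : 0 < r ^ 2 + a ^ 2 := by positivity
  have hnum : |γv * (a ^ 2 - r ^ 2) + 2 * a * κ * r| ≤ (|γv| + |κ|) * (r ^ 2 + a ^ 2) := by
    have h1 : |a ^ 2 - r ^ 2| ≤ r ^ 2 + a ^ 2 := abs_le.2 ⟨by nlinarith, by nlinarith⟩
    have h2 : |2 * a * r| ≤ r ^ 2 + a ^ 2 := abs_le.2 ⟨by nlinarith [sq_nonneg (a + r)],
      by nlinarith [sq_nonneg (a - r)]⟩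
    calc |γv * (a ^ 2 - r ^ 2) + 2 * a * κ * r|
        ≤ |γv * (a ^ 2 - r ^ 2)| + |κ * (2 * a * r)| := by
          rw [show 2 * a * κ * r = κ * (2 * a * r) by ring]; exact abs_add_le _ _
      _ = |γv| * |a ^ 2 - r ^ 2| + |κ| * |2 * a * r| := by rw [abs_mul, abs_mul]
      _ ≤ (|γv| + |κ|) * (r ^ 2 + a ^ 2) := by
          nlinarith [mul_le_mul_of_nonneg_left h1 (abs_nonneg γv),
            mul_le_mul_of_nonneg_left h2 (abs_nonneg κ)]
  rw [(hasDerivAt_Vrad ha κ γv r).deriv, abs_div,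
    abs_of_pos (by positivity : 0 < (r ^ 2 + a ^ 2) ^ 2),
    div_le_div_iff₀ (by positivity) hs]
  nlinarith [mul_le_mul_of_nonneg_right hnum hs.le]

lemma HasDerivAt.complex_re {f : ℝ → ℂ} {f' : ℂ} {x : ℝ} (h : HasDerivAt f f' x) :
    HasDerivAt (fun t => (f t).re) f'.re x :=
  reCLM.hasFDerivAt.comp_hasDerivAt x h

def density (R1 R2 : ℝ → ℂ) (r : ℝ) : ℝ := ‖R1 r‖ ^ 2 + ‖R2 r‖ ^ 2

def cross (R1 R2 : ℝ → ℂ) (r : ℝ) : ℂ := conj (R1 r) * R2 r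

section Bilinear

variable {R1 R2 : ℝ → ℂ} {r : ℝ}

lemma density_nonneg : 0 ≤ density R1 R2 r := by unfold density; positivity

lemma density_comm : density R2 R1 = density R1 R2 := funext fun _ => add_comm _ _

lemma density_eq_zero_iff : density R1 R2 r = 0 ↔ R1 r = 0 ∧ R2 r = 0 := by
  rw [density, add_eq_zero_iff_of_nonneg (by positivity) (by positivity)]
  simp

lemma norm_cross_le : ‖cross R1 R2 r‖ ≤ density R1 R2 r / 2 := by
  rw [cross, norm_mul, norm_conj, density]
  nlinarith [sq_nonneg (‖R1 r‖ - ‖R2 r‖)]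

lemma abs_re_mul_cross_le (z : ℂ) : |(z * cross R1 R2 r).re| ≤ ‖z‖ * (density R1 R2 r / 2) :=
  (abs_re_le_norm _).trans <| by rw [norm_mul]; gcongr; exact norm_cross_le

lemma abs_im_mul_cross_le (z : ℂ) : |(z * cross R1 R2 r).im| ≤ ‖z‖ * (density R1 R2 r / 2) :=
  (abs_im_le_norm _).trans <| by rw [norm_mul]; gcongr; exact norm_cross_le

variable {e : ℝ} {z : ℂ}

lemma hasDerivAt_density (hR1 : HasDerivAt R1 (-I * (e * R1 r + z * R2 r)) r)
    (hR2 : HasDerivAt R2 (I * (e * R2 r + conj z * R1 r)) r) :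
    HasDerivAt (density R1 R2) (4 * (z * cross R1 R2 r).im) r := by
  refine (hR1.norm_sq.add hR2.norm_sq).congr_deriv ?_
  simp only [Complex.inner, cross, mul_re, mul_im, conj_re, conj_im, I_re, I_im, add_re, add_im,
    ofReal_re, ofReal_im, neg_re, neg_im]
  ring

lemma hasDerivAt_cross (hR1 : HasDerivAt R1 (-I * (e * R1 r + z * R2 r)) r)
    (hR2 : HasDerivAt R2 (I * (e * R2 r + conj z * R1 r)) r) :
    HasDerivAt (cross R1 R2) (2 * I * e * cross R1 R2 r + I * conj z * density R1 R2 r) r := by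
  refine (hR1.star.mul hR2).congr_deriv ?_
  simp only [cross, density, star_def, map_mul, map_add, map_neg, conj_I, conj_ofReal]
  push_cast
  linear_combination (I * conj z) * (conj_mul' (R1 r) + conj_mul' (R2 r))

lemma hasDerivAt_re_mul_cross_add_mul_density {Z : ℝ → ℂ} {ε : ℝ → ℝ} {Z' : ℂ} {ε' : ℝ}
    (hZ : HasDerivAt Z Z' r) (hε : HasDerivAt ε ε' r)
    (hR1 : HasDerivAt R1 (-I * (ε r * R1 r + Z r * R2 r)) r)
    (hR2 : HasDerivAt R2 (I * (ε r * R2 r + conj (Z r) * R1 r)) r) :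
    HasDerivAt (fun t => (Z t * cross R1 R2 t).re + ε t / 2 * density R1 R2 t)
      ((Z' * cross R1 R2 r).re + ε' / 2 * density R1 R2 r) r := by
  refine ((hZ.mul (hasDerivAt_cross hR1 hR2)).complex_re.add
    ((hε.div_const 2).mul (hasDerivAt_density hR1 hR2))).congr_deriv ?_
  simp only [mul_re, mul_im, add_re, add_im, I_re, I_im, conj_re, conj_im, ofReal_re, ofReal_im,
    re_ofNat, im_ofNat]
  ring

end Bilinear

lemma norm_ofReal_add_I_mul_le (p w : ℝ) : ‖(p : ℂ) + I * w‖ ≤ |p| + |w| :=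
  (norm_add_le _ _).trans (by simp)

def coupling (a m lam r : ℝ) : ℂ := Prad a m r + I * Wrad a lam r

def lyapunov (a m lam κ γv E : ℝ) (R1 R2 : ℝ → ℂ) (r : ℝ) : ℝ :=
  (coupling a m lam r * cross R1 R2 r).re + (E + Vrad a κ γv r) / 2 * density R1 R2 r

lemma norm_coupling_le (a m lam r : ℝ) : ‖coupling a m lam r‖ ≤ |m| + |Wrad a lam r| :=
  (norm_ofReal_add_I_mul_le _ _).trans (add_le_add (abs_Prad_le a m r) le_rfl)

section Radial

variable {a m lam κ γv E r : ℝ} {R1 R2 : ℝ → ℂ}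

lemma hasDerivAt_coupling (ha : a ≠ 0) :
    HasDerivAt (coupling a m lam) (deriv (Prad a m) r + I * deriv (Wrad a lam) r) r :=
  (hasDerivAt_Prad ha m r).differentiableAt.hasDerivAt.ofReal_comp.add
    ((hasDerivAt_Wrad ha lam r).differentiableAt.hasDerivAt.ofReal_comp.const_mul I)

lemma RadEq.hasDerivAt (hR1 : DifferentiableAt ℝ R1 r) (hR2 : DifferentiableAt ℝ R2 r)
    (h : RadEq a m lam κ γv E R1 R2 r) :
    HasDerivAt R1 (-I * ((E + Vrad a κ γv r : ℝ) * R1 r + coupling a m lam r * R2 r)) r ∧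
    HasDerivAt R2 (I * ((E + Vrad a κ γv r : ℝ) * R2 r + conj (coupling a m lam r) * R1 r)) r := by
  obtain ⟨h1, h2⟩ := h
  refine ⟨hR1.hasDerivAt.congr_deriv ?_, hR2.hasDerivAt.congr_deriv ?_⟩ <;>
    simp only [coupling, map_add, map_mul, conj_I, conj_ofReal] <;> push_cast
  · linear_combination (-I) * h1 + deriv R1 r * I_sq
  · linear_combination I * h2 + deriv R2 r * I_sq

lemma RadEq.swap (h : RadEq a m lam κ γv E R1 R2 r) :
    RadEq a (-m) lam (-κ) (-γv) (-E) R2 R1 r := by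
  have hV : Vrad a (-κ) (-γv) r = -Vrad a κ γv r := by unfold Vrad; ring
  have hP : Prad a (-m) r = -Prad a m r := by unfold Prad; ring
  obtain ⟨h1, h2⟩ := h
  simp only [RadEq, hV, hP]
  push_cast
  exact ⟨by linear_combination -h2, by linear_combination -h1⟩

lemma hasDerivAt_lyapunov (ha : a ≠ 0)
    (hR1 : HasDerivAt R1 (-I * ((E + Vrad a κ γv r : ℝ) * R1 r + coupling a m lam r * R2 r)) r)
    (hR2 : HasDerivAt R2
      (I * ((E + Vrad a κ γv r : ℝ) * R2 r + conj (coupling a m lam r) * R1 r)) r) :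
    HasDerivAt (lyapunov a m lam κ γv E R1 R2)
      (((deriv (Prad a m) r + I * deriv (Wrad a lam) r) * cross R1 R2 r).re
        + deriv (Vrad a κ γv) r / 2 * density R1 R2 r) r :=
  hasDerivAt_re_mul_cross_add_mul_density (hasDerivAt_coupling ha)
    ((hasDerivAt_Vrad ha κ γv r).differentiableAt.hasDerivAt.const_add E) hR1 hR2

lemma lyapunov_bounds (h : |Vrad a κ γv r| + |Wrad a lam r| ≤ (E - |m|) / 2) :
    (E - |m|) / 4 * density R1 R2 r ≤ lyapunov a m lam κ γv E R1 R2 r ∧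
      lyapunov a m lam κ γv E R1 R2 r ≤ E * density R1 R2 r := by
  have hF : 0 ≤ density R1 R2 r := density_nonneg
  have hre := abs_le.1 (abs_re_mul_cross_le (R1 := R1) (R2 := R2) (r := r) (coupling a m lam r))
  have hz := mul_le_mul_of_nonneg_right (norm_coupling_le a m lam r) (div_nonneg hF zero_le_two)
  have hV₁ := mul_le_mul_of_nonneg_right (neg_abs_le (Vrad a κ γv r)) hF
  have hV₂ := mul_le_mul_of_nonneg_right (le_abs_self (Vrad a κ γv r)) hF
  have hVW := mul_le_mul_of_nonneg_right h hF
  have hVW₀ := mul_nonneg (add_nonneg (abs_nonneg (Vrad a κ γv r)) (abs_nonneg (Wrad a lam r))) hF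
  unfold lyapunov
  constructor <;> linarith

lemma neg_div_sq_mul_density_le_deriv_lyapunov (ha : a ≠ 0) (hr : r ≠ 0) :
    -((|m * a| + |lam| + |γv| + |κ|) / r ^ 2 * density R1 R2 r) ≤
      ((deriv (Prad a m) r + I * deriv (Wrad a lam) r) * cross R1 R2 r).re
        + deriv (Vrad a κ γv) r / 2 * density R1 R2 r := by
  have hF : 0 ≤ density R1 R2 r := density_nonneg
  have hsum : |deriv (Prad a m) r| + |deriv (Wrad a lam) r| + |deriv (Vrad a κ γv) r| ≤
      (|m * a| + |lam| + |γv| + |κ|) / r ^ 2 := by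
    calc _ ≤ |m * a| / (r ^ 2 + a ^ 2) + |lam| / (r ^ 2 + a ^ 2)
          + (|γv| + |κ|) / (r ^ 2 + a ^ 2) := by
          gcongr
          exacts [abs_deriv_Prad_le ha m r, abs_deriv_Wrad_le ha lam r, abs_deriv_Vrad_le ha κ γv r]
      _ = (|m * a| + |lam| + |γv| + |κ|) / (r ^ 2 + a ^ 2) := by ring
      _ ≤ (|m * a| + |lam| + |γv| + |κ|) / r ^ 2 := by gcongr; nlinarith
  have hre := abs_le.1 (abs_re_mul_cross_le (R1 := R1) (R2 := R2) (r := r)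
    (deriv (Prad a m) r + I * deriv (Wrad a lam) r))
  have hz := mul_le_mul_of_nonneg_right (norm_ofReal_add_I_mul_le (deriv (Prad a m) r)
    (deriv (Wrad a lam) r)) (div_nonneg hF zero_le_two)
  have hV := mul_le_mul_of_nonneg_right (neg_abs_le (deriv (Vrad a κ γv) r)) hF
  have hs := mul_le_mul_of_nonneg_right hsum hF
  have hc := mul_nonneg (by positivity : 0 ≤ (|m * a| + |lam| + |γv| + |κ|) / r ^ 2) hF
  linarith

lemma neg_mul_density_le_im_coupling_mul_cross (ha : a ≠ 0) :
    -(2 * (|m| + |lam| / |a|) * density R1 R2 r) ≤ 4 * (coupling a m lam r * cross R1 R2 r).im := by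
  have hz := (norm_coupling_le a m lam r).trans (add_le_add le_rfl (abs_Wrad_le ha lam r))
  have hF : 0 ≤ density R1 R2 r := density_nonneg
  linarith [(abs_le.1 (abs_im_mul_cross_le (R1 := R1) (R2 := R2) (r := r) (coupling a m lam r))).1,
    mul_le_mul_of_nonneg_right hz (div_nonneg hF zero_le_two)]

end Radial

theorem density_eq_zero_of_abs_lt {a m lam κ γv E : ℝ} {R1 R2 : ℝ → ℂ} (ha : a ≠ 0)
    (hE : |m| < E) (hR1 : Differentiable ℝ R1) (hR2 : Differentiable ℝ R2)
    (heq : ∀ r, RadEq a m lam κ γv E R1 R2 r) (hL2 : Integrable (density R1 R2)) (r : ℝ) :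
    density R1 R2 r = 0 := by
  have hsys := fun t => (heq t).hasDerivAt (hR1 t) (hR2 t)
  obtain ⟨T, hT⟩ := eventually_atTop.1 <| (eventually_ge_atTop 1).and <|
    (tendsto_abs_Vrad_add_abs_Wrad a lam κ γv).eventually
      (eventually_le_nhds (half_pos (sub_pos.2 hE)))
  have hT0 : 0 < T := one_pos.trans_le (hT T le_rfl).1
  have htail : ∀ t ≥ T, density R1 R2 t = 0 := fun t ht =>
    eq_zero_of_lyapunov_of_integrable hT0 (by linarith : 0 < (E - |m|) / 4) (by positivity) hL2
      (fun _ _ => density_nonneg) (fun s _ => hasDerivAt_lyapunov ha (hsys s).1 (hsys s).2)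
      (fun s hs => (lyapunov_bounds (hT s hs).2).1) (fun s hs => (lyapunov_bounds (hT s hs).2).2)
      (fun s hs => neg_div_sq_mul_density_le_deriv_lyapunov ha (hT0.trans_le hs).ne') ht
  rcases le_total T r with h | h
  · exact htail r h
  · exact eq_zero_of_neg_mul_le_deriv_of_le (fun t => hasDerivAt_density (hsys t).1 (hsys t).2)
      (fun _ => density_nonneg) (fun _ => neg_mul_density_le_im_coupling_mul_cross ha)
      (htail T le_rfl) h

theorem no_square_integrable_radial_solution_outside_gap
    (a m lam κ γv E : ℝ) (ha : a ≠ 0) (hm : 0 < m) (hE : m < |E|)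
    (R1 R2 : ℝ → ℂ)
    (hR1 : Differentiable ℝ R1) (hR2 : Differentiable ℝ R2)
    (heq : ∀ r : ℝ, RadEq a m lam κ γv E R1 R2 r)
    (hL2 : Integrable (fun r => ‖R1 r‖^2 + ‖R2 r‖^2)) :
    ∀ r : ℝ, R1 r = 0 ∧ R2 r = 0 := by
  intro r
  rw [← density_eq_zero_iff]
  rcases lt_abs.1 hE with hpos | hneg
  · exact density_eq_zero_of_abs_lt ha (by rwa [abs_of_pos hm]) hR1 hR2 heq hL2 r
  · rw [← density_comm]
    refine density_eq_zero_of_abs_lt ha (by rwa [abs_neg, abs_of_pos hm]) hR2 hR1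
      (fun t => (heq t).swap) ?_ r
    rwa [density_comm]
end
end

section
/- (Prüfer transform of the radial system.) Let R : ℝ → (0,∞) and Ω : ℝ → ℝ be differentiable, and set R₁ = R e^{iΩ/2}, R₂ = R e^{−iΩ/2}. Then (R₁,R₂) satisfies T_rad(R₁,R₂) = E(R₁,R₂) pointwise on ℝ if and only if Ω and R satisfy the first-order system Ω′ = −2( P cosΩ + W sinΩ + V + E ) and R′/R = W cosΩ − P sinΩ pointwise on ℝ. -/
/-!
Since `R` and `Ω` are real, `R₂ = conj R₁`, and the second radial equation is the complex
conjugate of the first. With `R₁' = (R' + i R Ω'/2) e^{iΩ/2}`, the first equation multiplied by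
`e^{-iΩ/2}` has the equation for `Ω'` as its real part and the one for `R'` as its imaginary part.
-/

noncomputable section

open Complex ComplexConjugate

theorem radEq_conj_iff {a m lam κ γv E r : ℝ} {f : ℝ → ℂ} :
    RadEq a m lam κ γv E f (fun s => conj (f s)) r ↔
      I * deriv f r - (Vrad a κ γv r : ℂ) * f r
        - ((Prad a m r : ℂ) + I * (Wrad a lam r : ℂ)) * conj (f r) = E * f r := by
  have hderiv : deriv (fun s => conj (f s)) r = conj (deriv f r) := deriv.star
  rw [RadEq, hderiv, and_iff_left_of_imp]
  intro h
  have h' := congrArg conj h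
  simp only [map_sub, map_mul, map_add, conj_I, conj_ofReal, conj_conj] at h'
  linear_combination h'

theorem HasDerivAt.ofReal_mul_exp_I_mul_half {R Ω : ℝ → ℝ} {dR dΩ r : ℝ}
    (hR : HasDerivAt R dR r) (hΩ : HasDerivAt Ω dΩ r) :
    HasDerivAt (fun s => (R s : ℂ) * cexp (I * (Ω s : ℂ) / 2))
      ((dR + I * R r * dΩ / 2) * cexp (I * (Ω r : ℂ) / 2)) r := by
  refine (hR.ofReal_comp.mul ((hΩ.ofReal_comp.const_mul I).div_const 2).cexp).congr_deriv ?_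
  ring

theorem conj_exp_I_mul_half (θ : ℝ) :
    conj (cexp (I * θ / 2)) = cexp (I * θ / 2) * (Real.cos θ - Real.sin θ * I) := by
  have hexponent : conj (I * θ / 2) = I * θ / 2 + (-θ : ℝ) * I := by
    simp only [map_div₀, map_mul, conj_I, conj_ofReal, map_ofNat, ofReal_neg]
    ring
  rw [← exp_conj, hexponent, exp_add, exp_mul_I, ofReal_neg, cos_neg, sin_neg, ← ofReal_cos,
    ← ofReal_sin]
  ring

theorem radial_eq_polar_iff {R₀ dR θ dΩ p w v E : ℝ} (hR₀ : R₀ ≠ 0) :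
    I * ((dR + I * R₀ * dΩ / 2) * cexp (I * θ / 2)) - v * (R₀ * cexp (I * θ / 2))
        - (p + I * w) * conj (R₀ * cexp (I * θ / 2)) = E * (R₀ * cexp (I * θ / 2)) ↔
      dΩ = -2 * (p * Real.cos θ + w * Real.sin θ + v + E) ∧
        dR / R₀ = w * Real.cos θ - p * Real.sin θ := by
  have hresidual : I * ((dR + I * R₀ * dΩ / 2) * cexp (I * θ / 2)) - v * (R₀ * cexp (I * θ / 2))
        - (p + I * w) * conj (R₀ * cexp (I * θ / 2)) - E * (R₀ * cexp (I * θ / 2))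
      = cexp (I * θ / 2) *
          ((R₀ * (-(dΩ / 2) - (p * Real.cos θ + w * Real.sin θ + v + E)) : ℝ)
            + (dR - R₀ * (w * Real.cos θ - p * Real.sin θ) : ℝ) * I) := by
    rw [map_mul, conj_ofReal, conj_exp_I_mul_half]
    push_cast
    linear_combination (R₀ * dΩ / 2 + R₀ * w * sin θ) * cexp (I * θ / 2) * I_sq
  rw [← sub_eq_zero, hresidual, mul_eq_zero, or_iff_right (exp_ne_zero _)]
  simp only [Complex.ext_iff, add_re, ofReal_re, mul_re, I_re, ofReal_im, I_im, zero_re,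
    add_im, mul_im, zero_im, mul_zero, sub_zero, add_zero, zero_add, mul_one]
  refine and_congr ?_ ?_
  · rw [mul_eq_zero, or_iff_right hR₀]
    constructor <;> intro h <;> linarith
  · rw [div_eq_iff hR₀, sub_eq_zero, mul_comm]

theorem pruefer_transform_radial_general (a m lam κ γv E : ℝ)
    (R Ω : ℝ → ℝ) (hR : Differentiable ℝ R) (hΩ : Differentiable ℝ Ω)
    (hRpos : ∀ r : ℝ, 0 < R r) :
    (∀ r : ℝ, RadEq a m lam κ γv E
        (fun s => (R s : ℂ) * Complex.exp (Complex.I * (Ω s : ℂ) / 2))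
        (fun s => (R s : ℂ) * Complex.exp (-Complex.I * (Ω s : ℂ) / 2)) r) ↔
    (∀ r : ℝ,
      deriv Ω r = -2 * (Prad a m r * Real.cos (Ω r) + Wrad a lam r * Real.sin (Ω r)
        + Vrad a κ γv r + E) ∧
      deriv R r / R r
        = Wrad a lam r * Real.cos (Ω r) - Prad a m r * Real.sin (Ω r)) := by
  have hconj : (fun s => (R s : ℂ) * cexp (-I * (Ω s : ℂ) / 2))
      = fun s => conj ((R s : ℂ) * cexp (I * (Ω s : ℂ) / 2)) := by
    funext s
    rw [map_mul, conj_ofReal, ← exp_conj]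
    simp [neg_div, map_ofNat]
  refine forall_congr' fun r => ?_
  rw [hconj, radEq_conj_iff,
    ((hR r).hasDerivAt.ofReal_mul_exp_I_mul_half (hΩ r).hasDerivAt).deriv]
  exact radial_eq_polar_iff (hRpos r).ne'

theorem pruefer_transform_radial (a m lam κ γv E : ℝ) (ha : a ≠ 0) (hm : 0 < m)
    (R Ω : ℝ → ℝ) (hR : Differentiable ℝ R) (hΩ : Differentiable ℝ Ω)
    (hRpos : ∀ r : ℝ, 0 < R r) :
    (∀ r : ℝ, RadEq a m lam κ γv E
        (fun s => (R s : ℂ) * Complex.exp (Complex.I * (Ω s : ℂ) / 2))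
        (fun s => (R s : ℂ) * Complex.exp (-Complex.I * (Ω s : ℂ) / 2)) r) ↔
    (∀ r : ℝ,
      deriv Ω r = -2 * (Prad a m r * Real.cos (Ω r) + Wrad a lam r * Real.sin (Ω r)
        + Vrad a κ γv r + E) ∧
      deriv R r / R r
        = Wrad a lam r * Real.cos (Ω r) - Prad a m r * Real.sin (Ω r)) :=
  pruefer_transform_radial_general a m lam κ γv E R Ω hR hΩ hRpos
end
end

section
/- (Prüfer transform of the angular system.) Let S : (0,π) → (0,∞) and Θ : (0,π) → ℝ be differentiable, and set S₁ = S cos(Θ/2), S₂ = S sin(Θ/2). Then (S₁,S₂) satisfies T_ang(S₁,S₂) = λ(S₁,S₂) pointwise on (0,π) if and only if Θ and S satisfy the first-order system Θ′ = −2( λ + m a cosθ · cosΘ + k(θ) sinΘ ) and S′/S = k(θ) cosΘ − m a cosθ · sinΘ pointwise on (0,π). -/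
/- STATEMENT 11 (Prüfer transform of the angular system): with S : (0,π) → (0,∞)
and Θ : (0,π) → ℝ differentiable, and S₁ = S cos(Θ/2), S₂ = S sin(Θ/2), the pair
(S₁,S₂) satisfies T_ang(S₁,S₂) = λ(S₁,S₂) pointwise on (0,π) if and only if
Θ′ = −2(λ + m a cosθ · cosΘ + k(θ) sinΘ) and S′/S = k(θ) cosΘ − m a cosθ · sinΘ
pointwise on (0,π). -/

noncomputable section

/-- k(θ) = a E sinθ − κ/sinθ -/
def kang (a E κ θ : ℝ) : ℝ := a*E*Real.sin θ - κ/Real.sin θ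

/-- the (real) angular eigenvalue equations T_ang (S₁,S₂) = λ (S₁,S₂) at θ -/
def AngEqR (a m E κ lam : ℝ) (S1 S2 : ℝ → ℝ) (θ : ℝ) : Prop :=
  -(m*a*Real.cos θ) * S1 θ - deriv S2 θ - kang a E κ θ * S2 θ = lam * S1 θ ∧
  deriv S1 θ - kang a E κ θ * S1 θ + (m*a*Real.cos θ) * S2 θ = lam * S2 θ

/-!
Write `(S₁, S₂) = S · (cos φ, sin φ)` with `φ = Θ/2`. Projecting the eigenvalue system onto
the orthonormal frame `(cos φ, sin φ)`, `(-sin φ, cos φ)` is an invertible change of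
coordinates; one projection only involves `Θ′` and gives the angle equation, the other only
involves `S′/S` and gives the amplitude equation, via the double-angle formulas for `Θ = 2φ`.
-/

open Real

theorem hasDerivAt_mul_cos_half {S Θ : ℝ → ℝ} {S' Θ' x : ℝ}
    (hS : HasDerivAt S S' x) (hΘ : HasDerivAt Θ Θ' x) :
    HasDerivAt (fun u => S u * cos (Θ u / 2))
      (S' * cos (Θ x / 2) - S x * sin (Θ x / 2) * (Θ' / 2)) x :=
  (hS.mul (hΘ.div_const 2).cos).congr_deriv (by ring)

theorem hasDerivAt_mul_sin_half {S Θ : ℝ → ℝ} {S' Θ' x : ℝ}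
    (hS : HasDerivAt S S' x) (hΘ : HasDerivAt Θ Θ' x) :
    HasDerivAt (fun u => S u * sin (Θ u / 2))
      (S' * sin (Θ x / 2) + S x * cos (Θ x / 2) * (Θ' / 2)) x :=
  (hS.mul (hΘ.div_const 2).sin).congr_deriv (by ring)

theorem polar_half_angle_system_iff {S S' Θ Θ' μ k lam : ℝ} (hS : S ≠ 0) :
    (-μ * (S * cos (Θ / 2)) - (S' * sin (Θ / 2) + S * cos (Θ / 2) * (Θ' / 2))
        - k * (S * sin (Θ / 2)) = lam * (S * cos (Θ / 2)) ∧
      S' * cos (Θ / 2) - S * sin (Θ / 2) * (Θ' / 2) - k * (S * cos (Θ / 2))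
        + μ * (S * sin (Θ / 2)) = lam * (S * sin (Θ / 2))) ↔
    (Θ' = -2 * (lam + μ * cos Θ + k * sin Θ) ∧ S' / S = k * cos Θ - μ * sin Θ) := by
  have hunit := sin_sq_add_cos_sq (Θ / 2)
  have hcos : cos Θ = cos (Θ / 2) ^ 2 - sin (Θ / 2) ^ 2 := by
    rw [← cos_two_mul', mul_div_cancel₀ Θ two_ne_zero]
  have hsin : sin Θ = 2 * sin (Θ / 2) * cos (Θ / 2) := by
    rw [← sin_two_mul, mul_div_cancel₀ Θ two_ne_zero]
  rw [div_eq_iff hS, hcos, hsin]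
  constructor
  · rintro ⟨h₁, h₂⟩
    refine ⟨mul_left_cancel₀ hS ?_, ?_⟩
    · linear_combination (-2 * cos (Θ / 2)) * h₁ + (-2 * sin (Θ / 2)) * h₂
        - (S * Θ' + 2 * lam * S) * hunit
    · linear_combination (-sin (Θ / 2)) * h₁ + cos (Θ / 2) * h₂ - S' * hunit
  · rintro ⟨h₁, h₂⟩
    constructor
    · linear_combination (-(S * cos (Θ / 2)) / 2) * h₁ + (-sin (Θ / 2)) * h₂
        + (μ * S * cos (Θ / 2) + k * S * sin (Θ / 2)) * hunit
    · linear_combination (-(S * sin (Θ / 2)) / 2) * h₁ + cos (Θ / 2) * h₂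
        + (k * S * cos (Θ / 2) - μ * S * sin (Θ / 2)) * hunit

theorem pruefer_transform_angular_general (a m E κ lam : ℝ)
    (S Θ : ℝ → ℝ)
    (hS : ∀ θ ∈ Set.Ioo 0 Real.pi, DifferentiableAt ℝ S θ)
    (hΘ : ∀ θ ∈ Set.Ioo 0 Real.pi, DifferentiableAt ℝ Θ θ)
    (hSpos : ∀ θ ∈ Set.Ioo 0 Real.pi, 0 < S θ) :
    (∀ θ ∈ Set.Ioo 0 Real.pi, AngEqR a m E κ lam
        (fun u => S u * Real.cos (Θ u / 2))
        (fun u => S u * Real.sin (Θ u / 2)) θ) ↔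
    (∀ θ ∈ Set.Ioo 0 Real.pi,
      deriv Θ θ = -2 * (lam + m*a*Real.cos θ * Real.cos (Θ θ)
        + kang a E κ θ * Real.sin (Θ θ)) ∧
      deriv S θ / S θ
        = kang a E κ θ * Real.cos (Θ θ) - m*a*Real.cos θ * Real.sin (Θ θ)) := by
  refine forall₂_congr fun θ hθ => ?_
  have hS' := (hS θ hθ).hasDerivAt
  have hΘ' := (hΘ θ hθ).hasDerivAt
  rw [AngEqR, (hasDerivAt_mul_cos_half hS' hΘ').deriv, (hasDerivAt_mul_sin_half hS' hΘ').deriv]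
  exact polar_half_angle_system_iff (hSpos θ hθ).ne'

theorem pruefer_transform_angular (a m E κ lam : ℝ) (ha : a ≠ 0) (hm : 0 < m)
    (S Θ : ℝ → ℝ)
    (hS : ∀ θ ∈ Set.Ioo 0 Real.pi, DifferentiableAt ℝ S θ)
    (hΘ : ∀ θ ∈ Set.Ioo 0 Real.pi, DifferentiableAt ℝ Θ θ)
    (hSpos : ∀ θ ∈ Set.Ioo 0 Real.pi, 0 < S θ) :
    (∀ θ ∈ Set.Ioo 0 Real.pi, AngEqR a m E κ lam
        (fun u => S u * Real.cos (Θ u / 2))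
        (fun u => S u * Real.sin (Θ u / 2)) θ) ↔
    (∀ θ ∈ Set.Ioo 0 Real.pi,
      deriv Θ θ = -2 * (lam + m*a*Real.cos θ * Real.cos (Θ θ)
        + kang a E κ θ * Real.sin (Θ θ)) ∧
      deriv S θ / S θ
        = kang a E κ θ * Real.cos (Θ θ) - m*a*Real.cos θ * Real.sin (Θ θ)) :=
  pruefer_transform_angular_general a m E κ lam S Θ hS hΘ hSpos
end
end
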